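/- For any infinite cardinal κ, the order dimension of the poset of finite subsets of κ ordered by inclusion is at least log₂(log₂(κ)); in fact already the poset of subsets of κ of size at most 2 has dimension at least log₂(log₂(κ)). -/

import Mathlib

open Cardinal

universe u

/-- `L` is a realizer of the partial order on `P`: a family of linear orders
whose intersection is exactly `≤`. -/
def IsRealizer (P : Type u) [PartialOrder P] {ι : Type u} (L : ι → P → P → Prop) : Prop :=
  (∀ i, IsLinearOrder P (L i)) ∧ ∀ x y : P, x ≤ y ↔ ∀ i, L i x y

/-- The order dimension of a partial order: the least cardinality of a realizer. -/
noncomputable def orderDim (P : Type u) [PartialOrder P] : Cardinal.{u} :=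
  sInf { c | ∃ (ι : Type u) (L : ι → P → P → Prop), #ι = c ∧ IsRealizer P L }

/-- `clog2 μ = min {λ : μ ≤ 2^λ}`. -/
noncomputable def clog2 (μ : Cardinal.{u}) : Cardinal.{u} := sInf { l | μ ≤ 2 ^ l }

/-!
Let `L` be a realizer of `P` indexed by `ι`, and let `f a` (`a : α`) be an antichain with, for
every `a b`, an element `g a b` lying above exactly `f a` and `f b` among the `f x`.
Record for each pair the set `c a b = {i | f a ≤ᵢ f b}` and send `a` to the family
`{c a y | y ≠ a}` of subsets of `ι`. This map `α → Set (Set ι)` is injective: if `c a b = c b x`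
with `b ∉ {a, x}`, take `i` with `g a x ≤ᵢ f b`; then `f a ≤ᵢ f b`, so `f b ≤ᵢ f x`, while
`f x ≤ g a x ≤ᵢ f b`, forcing `x = b`. Hence `#α ≤ 2 ^ 2 ^ #ι`, and the singletons and pairs of
`κ.out` give `κ ≤ 2 ^ 2 ^ dim`.
-/

section Szpilrajn

variable {P : Type u} [PartialOrder P]

theorem exists_linearExtension_rel_of_not_le {x y : P} (hxy : ¬x ≤ y) :
    ∃ s : P → P → Prop, IsLinearOrder P s ∧ (∀ a b, a ≤ b → s a b) ∧ s y x := by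
  let q : P → P → Prop := fun a b => a ≤ b ∨ (a ≤ y ∧ x ≤ b)
  have hq : IsPartialOrder P q := by
    refine { refl := fun a => Or.inl le_rfl, trans := ?_, antisymm := ?_ }
    · rintro a b c (hab | ⟨hay, hxb⟩) (hbc | ⟨hby, hxc⟩)
      · exact Or.inl (hab.trans hbc)
      · exact Or.inr ⟨hab.trans hby, hxc⟩
      · exact Or.inr ⟨hay, hxb.trans hbc⟩
      · exact absurd (hxb.trans hby) hxy
    · rintro a b (hab | ⟨hay, hxb⟩) (hba | ⟨hby, hxa⟩)
      · exact le_antisymm hab hba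
      · exact absurd ((hxa.trans hab).trans hby) hxy
      · exact absurd ((hxb.trans hba).trans hay) hxy
      · exact absurd (hxb.trans hby) hxy
  obtain ⟨s, hs, hqs⟩ := extend_partialOrder q
  exact ⟨s, hs, fun a b hab => hqs _ _ (Or.inl hab), hqs _ _ (Or.inr ⟨le_rfl, le_rfl⟩)⟩

theorem exists_isRealizer (P : Type u) [PartialOrder P] :
    ∃ (ι : Type u) (L : ι → P → P → Prop), IsRealizer P L := by
  refine ⟨{s : P → P → Prop // IsLinearOrder P s ∧ ∀ a b, a ≤ b → s a b}, fun s => s.1,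
    fun s => s.2.1, fun x y => ⟨fun h s => s.2.2 x y h, fun h => ?_⟩⟩
  by_contra hxy
  obtain ⟨s, hs, hle, hyx⟩ := exists_linearExtension_rel_of_not_le hxy
  exact hxy (antisymm (r := s) (h ⟨s, hs, hle⟩) hyx ▸ le_rfl)

end Szpilrajn

namespace IsRealizer

variable {P : Type u} [PartialOrder P] {ι : Type u} {L : ι → P → P → Prop}

theorem rel_of_le (hL : IsRealizer P L) {x y : P} (h : x ≤ y) (i : ι) : L i x y :=
  (hL.2 x y).1 h i

theorem exists_rel_of_not_le (hL : IsRealizer P L) {x y : P} (h : ¬x ≤ y) : ∃ i, L i y x := by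
  obtain ⟨i, hi⟩ := not_forall.1 (mt (hL.2 x y).2 h)
  have := hL.1 i
  exact ⟨i, (total_of (L i) x y).resolve_left hi⟩

theorem comap {Q : Type u} [PartialOrder Q] {L : ι → Q → Q → Prop} (hL : IsRealizer Q L)
    (e : P ↪o Q) : IsRealizer P fun i x y => L i (e x) (e y) :=
  ⟨fun i => have := hL.1 i; (RelEmbedding.preimage e.toEmbedding (L i)).isLinearOrder,
    fun x y => e.le_iff_le.symm.trans (hL.2 (e x) (e y))⟩

theorem mk_le_two_pow_two_pow (hL : IsRealizer P L) {α : Type u} (f : α → P) (g : α → α → P)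
    (hf : ∀ a b, f a ≤ f b → a = b) (hg : ∀ a b x, f x ≤ g a b ↔ x = a ∨ x = b) :
    #α ≤ 2 ^ (2 ^ #ι : Cardinal) := by
  let c : α → α → Set ι := fun a b => {i | L i (f a) (f b)}
  have hc : ∀ a b x, a ≠ b → b ≠ x → c a b ≠ c b x := by
    intro a b x hab hbx hcab
    obtain ⟨i, hi⟩ := hL.exists_rel_of_not_le (x := f b) (y := g a x)
      (by simp [hg, hab.symm, hbx])
    have := hL.1 i
    have hab' : L i (f a) (f b) := _root_.trans (hL.rel_of_le ((hg a x a).2 (.inl rfl)) i) hi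
    have hbx' : L i (f b) (f x) := show i ∈ c b x from hcab ▸ hab'
    have hxb' : L i (f x) (f b) := _root_.trans (hL.rel_of_le ((hg a x x).2 (.inr rfl)) i) hi
    exact hbx (hf _ _ (antisymm hbx' hxb').ge).symm
  rw [← mk_set, ← mk_set]
  let A : α → Set (Set ι) := fun a => {T | ∃ y ≠ a, c a y = T}
  refine mk_le_of_injective (f := A) fun a b hAB => ?_
  by_contra hab
  obtain ⟨x, hxb, hx⟩ : c a b ∈ A b := hAB ▸ ⟨b, Ne.symm hab, rfl⟩
  exact hc a b x hab (Ne.symm hxb) hx.symm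

end IsRealizer

section OrderDim

variable {P : Type u} [PartialOrder P]

theorem orderDim_le_mk {ι : Type u} {L : ι → P → P → Prop} (hL : IsRealizer P L) :
    orderDim P ≤ #ι :=
  csInf_le' ⟨ι, L, rfl, hL⟩

theorem le_orderDim {c : Cardinal.{u}}
    (h : ∀ (ι : Type u) (L : ι → P → P → Prop), IsRealizer P L → c ≤ #ι) : c ≤ orderDim P := by
  obtain ⟨ι, L, hL⟩ := exists_isRealizer P
  refine le_csInf ⟨#ι, ι, L, rfl, hL⟩ ?_
  rintro _ ⟨ι, L, rfl, hL⟩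
  exact h ι L hL

theorem orderDim_le_of_orderEmbedding {Q : Type u} [PartialOrder Q] (e : P ↪o Q) :
    orderDim P ≤ orderDim Q :=
  le_orderDim fun _ L (hL : IsRealizer Q L) => orderDim_le_mk (hL.comap e)

theorem clog2_le_of_le_two_pow {μ l : Cardinal.{u}} (h : μ ≤ 2 ^ l) : clog2 μ ≤ l :=
  csInf_le' h

theorem clog2_clog2_le_orderDim {α : Type u} (f : α → P) (g : α → α → P)
    (hf : ∀ a b, f a ≤ f b → a = b) (hg : ∀ a b x, f x ≤ g a b ↔ x = a ∨ x = b) :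
    clog2 (clog2 #α) ≤ orderDim P :=
  le_orderDim fun _ L (hL : IsRealizer P L) =>
    clog2_le_of_le_two_pow (clog2_le_of_le_two_pow (hL.mk_le_two_pow_two_pow f g hf hg))

end OrderDim

theorem stmt5_general (κ : Cardinal.{u}) :
    clog2 (clog2 κ) ≤ orderDim (Finset κ.out) ∧
    clog2 (clog2 κ) ≤ orderDim {s : Finset κ.out // s.card ≤ 2} := by
  classical
  have hpairs : clog2 (clog2 κ) ≤ orderDim {s : Finset κ.out // s.card ≤ 2} := by
    simpa using clog2_clog2_le_orderDim (P := {s : Finset κ.out // s.card ≤ 2})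
      (fun a => ⟨{a}, by simp⟩)
      (fun a b => ⟨{a, b}, Finset.card_le_two⟩) (by simp) (by simp)
  exact ⟨hpairs.trans (orderDim_le_of_orderEmbedding (OrderEmbedding.subtype _)), hpairs⟩

/-- Lower bound: the dimension of the finite subsets of κ is at least
log₂(log₂ κ); indeed, already the subsets of size at most 2 have dimension
at least log₂(log₂ κ). -/
theorem stmt5 (κ : Cardinal.{u}) (hκ : ℵ₀ ≤ κ) :
    clog2 (clog2 κ) ≤ orderDim (Finset κ.out) ∧
    clog2 (clog2 κ) ≤ orderDim {s : Finset κ.out // s.card ≤ 2} :=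
  stmt5_general κ
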